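/- arXiv:2107.03490 — 2 statements merged into one kernel-verified Lean document; each statement's English description precedes it below -/
import Mathlib

section
/- Let X be a finite-dimensional real Banach space and T, A nonzero operators. If 0 ∈ conv{ x*(Tx) · x*(Ax) : (x, x*) ∈ M_{W(T)} }, then there exist t₁, t₂, t₃ ∈ [0,1] with t₁+t₂+t₃=1 and pairs (x_j, x_j*) ∈ M_{W(T)} such that the functional ρ(B) = (1/‖T‖_w) Σ_j t_j x_j*(Tx_j) x_j*(Bx_j) satisfies ρ(T) = ‖T‖_w, |ρ(B)| ≤ ‖B‖_w for all B, and ρ(A) = 0; hence T ⊥_B^w A. -/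
/-- The numerical radius of a bounded linear operator on a real space. -/
noncomputable def nrad {X : Type*} [NormedAddCommGroup X] [NormedSpace ℝ X]
    (T : X →L[ℝ] X) : ℝ :=
  sSup {r : ℝ | ∃ (x : X) (f : X →L[ℝ] ℝ), ‖x‖ = 1 ∧ ‖f‖ = 1 ∧ f x = 1 ∧ r = ‖f (T x)‖}

/-- The numerical radius attainment set of `T`. -/
noncomputable def MW {X : Type*} [NormedAddCommGroup X] [NormedSpace ℝ X]
    (T : X →L[ℝ] X) : Set (X × (X →L[ℝ] ℝ)) :=
  {p | ‖p.1‖ = 1 ∧ ‖p.2‖ = 1 ∧ p.2 p.1 = 1 ∧ |p.2 (T p.1)| = nrad T}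

/-! Averaging the functionals `B ↦ x*(Bx)` over points of `M_{W(T)}`, weighted by the signs
`x*(Tx) = ±‖T‖_w`, gives a functional of `w`-norm at most one that attains `‖T‖_w` at `T`.
In one dimension `0 ∈ conv{x*(Tx)·x*(Ax)}` already puts `0` on a segment between two such
values, and the corresponding average vanishes at `A`, which is Birkhoff–James orthogonality. -/

theorem Real.exists_mem_segment_of_mem_convexHull {S : Set ℝ} {x : ℝ}
    (hx : x ∈ convexHull ℝ S) : ∃ a ∈ S, ∃ b ∈ S, x ∈ segment ℝ a b := by
  obtain ⟨a, ha, hax⟩ : ∃ a ∈ S, a ≤ x := by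
    by_contra! hS
    exact lt_irrefl x (convexHull_min hS (convex_Ioi x) hx)
  obtain ⟨b, hb, hxb⟩ : ∃ b ∈ S, x ≤ b := by
    by_contra! hS
    exact lt_irrefl x (convexHull_min hS (convex_Iio x) hx)
  exact ⟨a, ha, b, hb, by rw [segment_eq_Icc (hax.trans hxb)]; exact ⟨hax, hxb⟩⟩

theorem le_add_smul_of_norming_functional {E : Type*} [AddCommGroup E] [Module ℝ E]
    (N : E → ℝ) (ρ : E →ₗ[ℝ] ℝ) {x a : E} (hx : ρ x = N x) (hρ : ∀ y, |ρ y| ≤ N y)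
    (ha : ρ a = 0) (c : ℝ) : N x ≤ N (x + c • a) :=
  calc N x = ρ (x + c • a) := by rw [map_add, map_smul, ha, smul_zero, add_zero, hx]
    _ ≤ |ρ (x + c • a)| := le_abs_self _
    _ ≤ N (x + c • a) := hρ _

section NumericalRadius

variable {X : Type*} [NormedAddCommGroup X] [NormedSpace ℝ X]

theorem abs_apply_le_nrad (B : X →L[ℝ] X) {x : X} {f : X →L[ℝ] ℝ}
    (hx : ‖x‖ = 1) (hf : ‖f‖ = 1) (hfx : f x = 1) : |f (B x)| ≤ nrad B := by
  have hbdd : BddAbove {r : ℝ | ∃ (x : X) (f : X →L[ℝ] ℝ),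
      ‖x‖ = 1 ∧ ‖f‖ = 1 ∧ f x = 1 ∧ r = ‖f (B x)‖} := by
    refine ⟨‖B‖, ?_⟩
    rintro r ⟨x, f, hx, hf, -, rfl⟩
    calc ‖f (B x)‖ ≤ ‖f‖ * (‖B‖ * ‖x‖) := f.le_opNorm_of_le (B.le_opNorm x)
      _ = ‖B‖ := by rw [hx, hf, one_mul, mul_one]
  exact le_csSup hbdd ⟨x, f, hx, hf, hfx, rfl⟩

theorem nrad_nonneg (B : X →L[ℝ] X) : 0 ≤ nrad B :=
  Real.sSup_nonneg fun _ ⟨_, _, _, _, _, hr⟩ => hr ▸ norm_nonneg _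

noncomputable def nradSupportFunctional {ι : Type*} [Fintype ι] (T : X →L[ℝ] X) (t : ι → ℝ)
    (q : ι → X × (X →L[ℝ] ℝ)) : (X →L[ℝ] X) →ₗ[ℝ] ℝ where
  toFun B := (1 / nrad T) * (∑ j, t j * (q j).2 (T (q j).1) * (q j).2 (B (q j).1))
  map_add' B C := by
    simp only [add_apply, map_add, mul_add, Finset.sum_add_distrib]
  map_smul' c B := by
    simp only [smul_apply, map_smul, smul_eq_mul, RingHom.id_apply, Finset.mul_sum]
    exact Finset.sum_congr rfl fun j _ => by ring

variable {ι : Type*} [Fintype ι] {T : X →L[ℝ] X} {t : ι → ℝ} {q : ι → X × (X →L[ℝ] ℝ)}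

theorem nradSupportFunctional_self (hsum : ∑ j, t j = 1) (hq : ∀ j, q j ∈ MW T) :
    nradSupportFunctional T t q T = nrad T := by
  have hsq : ∀ j, (q j).2 (T (q j).1) * (q j).2 (T (q j).1) = nrad T * nrad T := fun j => by
    rw [← abs_mul_abs_self, (hq j).2.2.2]
  change (1 / nrad T) * _ = _
  simp only [mul_assoc, hsq, ← Finset.sum_mul, hsum, one_mul]
  rw [one_div_mul_eq_div, mul_self_div_self]

theorem abs_nradSupportFunctional_le (ht : ∀ j, 0 ≤ t j) (hsum : ∑ j, t j = 1)
    (hq : ∀ j, q j ∈ MW T) (B : X →L[ℝ] X) :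
    |nradSupportFunctional T t q B| ≤ nrad B := by
  have hterm : ∀ j, |t j * (q j).2 (T (q j).1) * (q j).2 (B (q j).1)|
      ≤ t j * (nrad T * nrad B) := fun j => by
    obtain ⟨hx, hf, hfx, hTx⟩ := hq j
    rw [abs_mul, abs_mul, abs_of_nonneg (ht j), hTx, mul_assoc]
    gcongr
    · exact ht j
    · exact nrad_nonneg T
    · exact abs_apply_le_nrad B hx hf hfx
  have hsum_le : |∑ j, t j * (q j).2 (T (q j).1) * (q j).2 (B (q j).1)| ≤ nrad T * nrad B :=
    calc _ ≤ ∑ j, |t j * (q j).2 (T (q j).1) * (q j).2 (B (q j).1)| :=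
          Finset.abs_sum_le_sum_abs _ _
      _ ≤ ∑ j, t j * (nrad T * nrad B) := Finset.sum_le_sum fun j _ => hterm j
      _ = nrad T * nrad B := by rw [← Finset.sum_mul, hsum, one_mul]
  change |(1 / nrad T) * _| ≤ _
  rw [abs_mul, abs_of_nonneg (one_div_nonneg.mpr (nrad_nonneg T))]
  rcases (nrad_nonneg T).eq_or_lt with h0 | hpos
  · rw [← h0, div_zero, zero_mul]
    exact nrad_nonneg B
  · calc _ ≤ (1 / nrad T) * (nrad T * nrad B) := by gcongr
      _ = nrad B := by field_simp

end NumericalRadius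

theorem support_functional_from_convex_hull_general (X : Type*) [NormedAddCommGroup X]
    [NormedSpace ℝ X]
    (T A : X →L[ℝ] X)
    (h : (0 : ℝ) ∈ convexHull ℝ {d : ℝ | ∃ p ∈ MW T, d = p.2 (T p.1) * p.2 (A p.1)}) :
    (∃ (t : Fin 3 → ℝ) (q : Fin 3 → X × (X →L[ℝ] ℝ)),
      (∀ j, 0 ≤ t j ∧ t j ≤ 1) ∧ (∑ j, t j = 1) ∧ (∀ j, q j ∈ MW T) ∧
      (1 / nrad T) * (∑ j, t j * (q j).2 (T (q j).1) * (q j).2 (T (q j).1)) = nrad T ∧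
      (∀ B : X →L[ℝ] X,
        |(1 / nrad T) * (∑ j, t j * (q j).2 (T (q j).1) * (q j).2 (B (q j).1))| ≤ nrad B) ∧
      (1 / nrad T) * (∑ j, t j * (q j).2 (T (q j).1) * (q j).2 (A (q j).1)) = 0) ∧
    (∀ lam : ℝ, nrad T ≤ nrad (T + lam • A)) := by
  obtain ⟨_, ⟨p₁, hp₁, rfl⟩, _, ⟨p₂, hp₂, rfl⟩, θ₁, θ₂, hθ₁, hθ₂, hθ, hθ0⟩ :=
    Real.exists_mem_segment_of_mem_convexHull h
  set t : Fin 3 → ℝ := ![θ₁, θ₂, 0]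
  set q : Fin 3 → X × (X →L[ℝ] ℝ) := ![p₁, p₂, p₁]
  have ht : ∀ j, 0 ≤ t j := by
    intro j; fin_cases j <;> simp [t, hθ₁, hθ₂]
  have hsum : ∑ j, t j = 1 := by simp [t, Fin.sum_univ_three, hθ]
  have hq : ∀ j, q j ∈ MW T := by
    intro j; fin_cases j <;> simpa [q]
  have hA : nradSupportFunctional T t q A = 0 := by
    change (1 / nrad T) * _ = 0
    simp only [smul_eq_mul] at hθ0
    simp [t, q, Fin.sum_univ_three, mul_assoc, hθ0]
  have hρ := abs_nradSupportFunctional_le ht hsum hq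
  refine ⟨⟨t, q, fun j => ⟨ht j, ?_⟩, hsum, hq, nradSupportFunctional_self hsum hq, hρ, hA⟩,
    le_add_smul_of_norming_functional nrad _ (nradSupportFunctional_self hsum hq) hρ hA⟩
  exact (Finset.single_le_sum (fun i _ => ht i) (Finset.mem_univ j)).trans hsum.le

/-- if `0` lies in the convex hull of `{x*(Tx)·x*(Ax) : (x,x*) ∈ M_{W(T)}}`
then there exist `t₁, t₂, t₃ ∈ [0,1]` summing to `1` and pairs `(x_j, x_j*) ∈ M_{W(T)}`
such that `ρ(B) = (1/‖T‖_w) Σ_j t_j x_j*(Tx_j) x_j*(Bx_j)` satisfies `ρ(T) = ‖T‖_w`,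
`|ρ(B)| ≤ ‖B‖_w` for all `B`, and `ρ(A) = 0`; hence `T ⊥_B^w A`. -/
theorem support_functional_from_convex_hull (X : Type*) [NormedAddCommGroup X]
    [NormedSpace ℝ X] [FiniteDimensional ℝ X]
    (T A : X →L[ℝ] X) (hT : T ≠ 0) (hA : A ≠ 0)
    (h : (0 : ℝ) ∈ convexHull ℝ {d : ℝ | ∃ p ∈ MW T, d = p.2 (T p.1) * p.2 (A p.1)}) :
    (∃ (t : Fin 3 → ℝ) (q : Fin 3 → X × (X →L[ℝ] ℝ)),
      (∀ j, 0 ≤ t j ∧ t j ≤ 1) ∧ (∑ j, t j = 1) ∧ (∀ j, q j ∈ MW T) ∧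
      (1 / nrad T) * (∑ j, t j * (q j).2 (T (q j).1) * (q j).2 (T (q j).1)) = nrad T ∧
      (∀ B : X →L[ℝ] X,
        |(1 / nrad T) * (∑ j, t j * (q j).2 (T (q j).1) * (q j).2 (B (q j).1))| ≤ nrad B) ∧
      (1 / nrad T) * (∑ j, t j * (q j).2 (T (q j).1) * (q j).2 (A (q j).1)) = 0) ∧
    (∀ lam : ℝ, nrad T ≤ nrad (T + lam • A)) :=
  support_functional_from_convex_hull_general X T A h
end

section
/- Let X be the two-dimensional real space with regular hexagonal unit ball (vertices x₁=(1,0), x₂=(1/2,√3/2), x₃=(−1/2,√3/2) and their negatives). Define T(x,y) = x·u with u = (0,√3/2). Then ‖T‖_w = 1/2, and both (x₁, f₁) and (x₁, f₂) belong to M_{W(T)}, where f₁(x,y) = x − y/√3 and f₂(x,y) = x + y/√3; hence T is not nu-smooth. -/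
/-- The regular hexagon norm on `ℝ²`:
`‖(x,y)‖ = (√3|y| + |x| + ||y|/√3 − |x||)/2`. -/
noncomputable def hexNorm (x y : ℝ) : ℝ :=
  (Real.sqrt 3 * |y| + |x| + |(|y| / Real.sqrt 3 - |x|)|) / 2

/-! For a norming pair `(x, f)` write `x = (p, q)` and `f (x, y) = a x + b y`; then
`f (T x) = (√3 / 2) p b`, and testing `f` on the vertices `x₂`, `x₃` bounds `|p| · √3 |b| ≤ 1`,
so `‖T‖_w ≤ 1/2`, with equality at `(x₁, f₁)` and `(x₁, f₂)`. Let `A`, `B` be the operators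
`v ↦ (e v).1 • x₂` and `v ↦ (e v).1 • x₃`. Since `f₁ x₂ = 0` and `f₂ x₃ = 0`, the attaining
pairs witness `T ⟂ A` and `T ⟂ B`; but `u` is the midpoint of `x₂` and `x₃`, so
`T - (A + B) / 2 = 0` has numerical radius `0 < ‖T‖_w`. -/

section NumericalRadius

variable {X : Type*} [NormedAddCommGroup X] [NormedSpace ℝ X]

/-- Birkhoff–James orthogonality `T ⟂ A` for the numerical radius. -/
def NradOrthogonal (T A : X →L[ℝ] X) : Prop :=
  ∀ lam : ℝ, nrad T ≤ nrad (T + lam • A)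

lemma bddAbove_nrad_set (T : X →L[ℝ] X) :
    BddAbove {r : ℝ | ∃ (x : X) (f : X →L[ℝ] ℝ), ‖x‖ = 1 ∧ ‖f‖ = 1 ∧ f x = 1 ∧ r = ‖f (T x)‖} := by
  refine ⟨‖T‖, ?_⟩
  rintro r ⟨x, f, hx, hf, -, rfl⟩
  calc ‖f (T x)‖ ≤ ‖f‖ * ‖T x‖ := f.le_opNorm _
  _ ≤ ‖f‖ * (‖T‖ * ‖x‖) := by gcongr; exact T.le_opNorm x
  _ = ‖T‖ := by rw [hf, hx, one_mul, mul_one]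

lemma norm_apply_le_nrad (T : X →L[ℝ] X) {x : X} {f : X →L[ℝ] ℝ} (hx : ‖x‖ = 1) (hf : ‖f‖ = 1)
    (hfx : f x = 1) : ‖f (T x)‖ ≤ nrad T :=
  le_csSup (bddAbove_nrad_set T) ⟨x, f, hx, hf, hfx, rfl⟩

lemma nrad_le {T : X →L[ℝ] X} {c : ℝ} (hc : 0 ≤ c)
    (h : ∀ (x : X) (f : X →L[ℝ] ℝ), ‖x‖ = 1 → ‖f‖ = 1 → f x = 1 → ‖f (T x)‖ ≤ c) :
    nrad T ≤ c :=
  Real.sSup_le (by rintro r ⟨x, f, hx, hf, hfx, rfl⟩; exact h x f hx hf hfx) hc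

lemma nrad_zero : nrad (0 : X →L[ℝ] X) = 0 :=
  le_antisymm (nrad_le le_rfl fun _ _ _ _ _ ↦ by simp)
    (Real.sSup_nonneg fun _ ⟨_, _, _, _, _, hr⟩ ↦ hr ▸ norm_nonneg _)

lemma NradOrthogonal.of_mem_MW {T A : X →L[ℝ] X} {p : X × (X →L[ℝ] ℝ)} (hp : p ∈ MW T)
    (hA : p.2 (A p.1) = 0) : NradOrthogonal T A := by
  obtain ⟨hx, hf, hfx, hT⟩ := hp
  intro lam
  simpa [hA, ← hT] using norm_apply_le_nrad (T + lam • A) hx hf hfx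

theorem not_nradOrthogonal_add_of_mem_MW {T A B : X →L[ℝ] X} {p q : X × (X →L[ℝ] ℝ)}
    (hp : p ∈ MW T) (hq : q ∈ MW T) (hA : p.2 (A p.1) = 0) (hB : q.2 (B q.1) = 0)
    {c : ℝ} (hTAB : T = c • (A + B)) (hT : 0 < nrad T) :
    ¬ ∀ A B : X →L[ℝ] X, NradOrthogonal T A → NradOrthogonal T B → NradOrthogonal T (A + B) :=
  fun h ↦ by
    have := h A B (.of_mem_MW hp hA) (.of_mem_MW hq hB) (-c)
    rw [neg_smul, ← hTAB, add_neg_cancel, nrad_zero] at this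
    linarith

end NumericalRadius

lemma abs_add_abs_le_of_abs_add_le_of_abs_neg_add_le {a b c : ℝ} (h₁ : |a + b| ≤ c)
    (h₂ : |-a + b| ≤ c) : |a| + |b| ≤ c := by
  rcases abs_le.mp h₁ with ⟨h₁l, h₁r⟩
  rcases abs_le.mp h₂ with ⟨h₂l, h₂r⟩
  rcases abs_cases a with ⟨ha, _⟩ | ⟨ha, _⟩ <;> rcases abs_cases b with ⟨hb, _⟩ | ⟨hb, _⟩ <;>
    linarith

/-- `P, R` are the scaled coordinates `|p|, |q|/√3` of a unit vector and `α, β` the scaled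
coordinates `|a|, √3 |b|` of a unit functional: the hexagon lies in `P + R ≤ 1` and its dual
ball in `α + β ≤ 2`. -/
lemma mul_le_one_of_one_le_add_mul {P R α β : ℝ} (hR : 0 ≤ R) (hα : 0 ≤ α) (hβ : 0 ≤ β)
    (hPR : P + R ≤ 1) (hαβ : α + β ≤ 2) (h : 1 ≤ P * α + R * β) : P * β ≤ 1 := by
  rcases le_or_gt P (1 / 2) with hP' | hP'
  · nlinarith [mul_le_mul hP' (show β ≤ 2 by linarith) hβ (by norm_num)]
  · have hβ1 : β ≤ 1 := by
      by_contra! hβ1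
      nlinarith [mul_le_mul_of_nonneg_left (show α ≤ 2 - β by linarith) (show 0 ≤ P by linarith),
        mul_le_mul_of_nonneg_right (show R ≤ 1 - P by linarith) hβ]
    nlinarith [mul_le_mul (show P ≤ 1 by linarith) hβ1 hβ (by norm_num)]

lemma abs_add_abs_div_sqrt_three_le_hexNorm (p q : ℝ) : |p| + |q| / √3 ≤ hexNorm p q := by
  have h3 : √3 * |q| = 3 * (|q| / √3) := by
    field_simp
    rw [Real.sq_sqrt (by norm_num), mul_comm]
  rw [hexNorm, h3]
  linarith [neg_abs_le (|q| / √3 - |p|)]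

lemma hexNorm_one_zero : hexNorm 1 0 = 1 := by
  simp [hexNorm]

lemma sqrt_three_div_two_div_sqrt_three : √3 / 2 / √3 = 1 / 2 := by
  field_simp

lemma hexNorm_of_abs_eq_half {c : ℝ} (hc : |c| = 1 / 2) : hexNorm c (√3 / 2) = 1 := by
  rw [hexNorm, abs_of_pos (by positivity : 0 < √3 / 2), hc, sqrt_three_div_two_div_sqrt_three,
    sub_self, abs_zero]
  nlinarith [Real.mul_self_sqrt (show (0 : ℝ) ≤ 3 by norm_num)]

lemma map_eq_fst_mul_add_snd_mul {X F : Type*} [AddCommGroup X] [Module ℝ X]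
    [FunLike F X ℝ] [LinearMapClass F ℝ X ℝ] (e : X ≃ₗ[ℝ] ℝ × ℝ) (f : F) (v : X) :
    f v = (e v).1 * f (e.symm (1, 0)) + (e v).2 * f (e.symm (0, 1)) := by
  have hv : e v = (e v).1 • (1, 0) + (e v).2 • (0, 1) := by ext <;> simp
  conv_lhs => rw [← e.symm_apply_apply v, hv]
  rw [map_add, map_smul, map_smul, map_add, map_smul, map_smul, smul_eq_mul, smul_eq_mul]

section Hexagon

variable {X : Type*} [NormedAddCommGroup X] [NormedSpace ℝ X] (e : X ≃ₗ[ℝ] ℝ × ℝ)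

lemma norm_symm_one_zero (hnorm : ∀ v : X, ‖v‖ = hexNorm (e v).1 (e v).2) :
    ‖e.symm (1, 0)‖ = 1 := by
  rw [hnorm, e.apply_symm_apply, hexNorm_one_zero]

lemma norm_eq_one_of_apply_eq_fst_add_mul (hnorm : ∀ v : X, ‖v‖ = hexNorm (e v).1 (e v).2)
    {σ : ℝ} (hσ : |σ| = 1) {f : X →L[ℝ] ℝ} (hf : ∀ v, f v = (e v).1 + σ * ((e v).2 / √3)) :
    ‖f‖ = 1 := by
  refine le_antisymm (f.opNorm_le_bound zero_le_one fun v ↦ ?_) ?_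
  · calc ‖f v‖ ≤ |(e v).1| + |σ * ((e v).2 / √3)| := by
          rw [hf, Real.norm_eq_abs]; exact abs_add_le _ _
    _ = |(e v).1| + |(e v).2| / √3 := by
          rw [abs_mul, hσ, one_mul, abs_div, abs_of_pos (show 0 < √3 by positivity)]
    _ ≤ 1 * ‖v‖ := by rw [one_mul, hnorm]; exact abs_add_abs_div_sqrt_three_le_hexNorm _ _
  · simpa [hf] using f.unit_le_opNorm _ (norm_symm_one_zero e hnorm).le

lemma abs_apply_symm_one_zero_of_apply_eq_fst_add_mul {u : X} (hu : e u = (0, √3 / 2))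
    {T : X →L[ℝ] X} (hT : ∀ v : X, T v = (e v).1 • u) {σ : ℝ} (hσ : |σ| = 1)
    {f : X →L[ℝ] ℝ} (hf : ∀ v, f v = (e v).1 + σ * ((e v).2 / √3)) :
    |f (T (e.symm (1, 0)))| = 1 / 2 := by
  simp [hT, hf, hu, sqrt_three_div_two_div_sqrt_three, abs_mul, hσ]

lemma abs_fst_mul_le_of_norming (hnorm : ∀ v : X, ‖v‖ = hexNorm (e v).1 (e v).2)
    {x : X} {f : X →L[ℝ] ℝ} (hx : ‖x‖ = 1) (hf : ‖f‖ = 1) (hfx : f x = 1) :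
    |(e x).1| * (√3 * |f (e.symm (0, 1))|) ≤ 1 := by
  have hfv : ∀ v, f v = (e v).1 * f (e.symm (1, 0)) + (e v).2 * f (e.symm (0, 1)) :=
    map_eq_fst_mul_add_snd_mul e f
  set a := f (e.symm (1, 0))
  set b := f (e.symm (0, 1))
  have hvertex : ∀ c : ℝ, |c| = 1 / 2 → |c * a + √3 / 2 * b| ≤ 1 := fun c hc ↦ by
    simpa [hf, hfv, hnorm, hexNorm_of_abs_eq_half hc] using f.unit_le_opNorm (e.symm (c, √3 / 2))
  have hdual : |a| + √3 * |b| ≤ 2 := by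
    have h := abs_add_abs_le_of_abs_add_le_of_abs_neg_add_le (hvertex (1 / 2) (by norm_num))
      (by simpa using hvertex (-(1 / 2)) (by norm_num))
    rw [abs_mul, abs_mul, abs_of_pos (show (0 : ℝ) < 1 / 2 by norm_num),
      abs_of_pos (show 0 < √3 / 2 by positivity)] at h
    linarith
  have hball : |(e x).1| + |(e x).2| / √3 ≤ 1 :=
    hx ▸ hnorm x ▸ abs_add_abs_div_sqrt_three_le_hexNorm _ _
  have hpair : 1 ≤ |(e x).1| * |a| + |(e x).2| / √3 * (√3 * |b|) :=
    calc 1 = |(e x).1 * a + (e x).2 * b| := by rw [← hfv, hfx, abs_one]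
    _ ≤ |(e x).1| * |a| + |(e x).2| * |b| := by
      rw [← abs_mul, ← abs_mul]; exact abs_add_le _ _
    _ = _ := by field_simp
  exact mul_le_one_of_one_le_add_mul (by positivity) (abs_nonneg _) (by positivity)
    hball hdual hpair

lemma nrad_le_half (hnorm : ∀ v : X, ‖v‖ = hexNorm (e v).1 (e v).2) {u : X}
    (hu : e u = (0, √3 / 2)) {T : X →L[ℝ] X} (hT : ∀ v : X, T v = (e v).1 • u) :
    nrad T ≤ 1 / 2 := by
  refine nrad_le (by norm_num) fun x f hx hf hfx ↦ ?_
  have hfu : f u = √3 / 2 * f (e.symm (0, 1)) := by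
    rw [map_eq_fst_mul_add_snd_mul e f u, hu]; simp
  calc ‖f (T x)‖ = |(e x).1| * (√3 * |f (e.symm (0, 1))|) / 2 := by
        rw [hT, map_smul, hfu, smul_eq_mul, Real.norm_eq_abs, abs_mul, abs_mul, abs_div,
          abs_of_pos (show 0 < √3 by positivity), abs_two]
        ring
  _ ≤ 1 / 2 := by gcongr; exact abs_fst_mul_le_of_norming e hnorm hx hf hfx

lemma nrad_eq_half_of_apply_eq_fst_add_mul (hnorm : ∀ v : X, ‖v‖ = hexNorm (e v).1 (e v).2)
    {u : X} (hu : e u = (0, √3 / 2)) {T : X →L[ℝ] X} (hT : ∀ v : X, T v = (e v).1 • u)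
    {σ : ℝ} (hσ : |σ| = 1) {f : X →L[ℝ] ℝ} (hf : ∀ v, f v = (e v).1 + σ * ((e v).2 / √3)) :
    nrad T = 1 / 2 := by
  refine le_antisymm (nrad_le_half e hnorm hu hT) ?_
  rw [← abs_apply_symm_one_zero_of_apply_eq_fst_add_mul e hu hT hσ hf, ← Real.norm_eq_abs]
  exact norm_apply_le_nrad T (norm_symm_one_zero e hnorm)
    (norm_eq_one_of_apply_eq_fst_add_mul e hnorm hσ hf) (by simp [hf])

lemma mem_MW_of_apply_eq_fst_add_mul (hnorm : ∀ v : X, ‖v‖ = hexNorm (e v).1 (e v).2)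
    {u : X} (hu : e u = (0, √3 / 2)) {T : X →L[ℝ] X} (hT : ∀ v : X, T v = (e v).1 • u)
    {σ : ℝ} (hσ : |σ| = 1) {f : X →L[ℝ] ℝ} (hf : ∀ v, f v = (e v).1 + σ * ((e v).2 / √3)) :
    (e.symm (1, 0), f) ∈ MW T :=
  ⟨norm_symm_one_zero e hnorm, norm_eq_one_of_apply_eq_fst_add_mul e hnorm hσ hf, by simp [hf],
    by rw [abs_apply_symm_one_zero_of_apply_eq_fst_add_mul e hu hT hσ hf,
      nrad_eq_half_of_apply_eq_fst_add_mul e hnorm hu hT hσ hf]⟩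

noncomputable def fstSmulRight [FiniteDimensional ℝ X] (w : X) : X →L[ℝ] X :=
  ((ContinuousLinearMap.fst ℝ ℝ ℝ).comp e.toContinuousLinearEquiv.toContinuousLinearMap).smulRight w

@[simp]
lemma fstSmulRight_apply [FiniteDimensional ℝ X] (w v : X) : fstSmulRight e w v = (e v).1 • w :=
  rfl

end Hexagon

/-- on the two-dimensional real space with regular hexagonal unit ball,
for `T(x,y) = x • u` with `u = (0, √3/2)`, one has `‖T‖_w = 1/2`, both `(x₁, f₁)` and
`(x₁, f₂)` belong to `M_{W(T)}` where `x₁ = (1,0)`, `f₁(x,y) = x − y/√3`,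
`f₂(x,y) = x + y/√3`; hence `T` is not nu-smooth. -/
theorem hexagon_not_nu_smooth_example (X : Type*) [NormedAddCommGroup X] [NormedSpace ℝ X]
    (e : X ≃ₗ[ℝ] ℝ × ℝ)
    (hnorm : ∀ v : X, ‖v‖ = hexNorm (e v).1 (e v).2)
    (u : X) (hu : e u = (0, Real.sqrt 3 / 2))
    (T : X →L[ℝ] X) (hT : ∀ v : X, T v = (e v).1 • u)
    (f₁ f₂ : X →L[ℝ] ℝ)
    (hf₁ : ∀ v : X, f₁ v = (e v).1 - (e v).2 / Real.sqrt 3)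
    (hf₂ : ∀ v : X, f₂ v = (e v).1 + (e v).2 / Real.sqrt 3) :
    nrad T = 1 / 2 ∧
    (e.symm (1, 0), f₁) ∈ MW T ∧ (e.symm (1, 0), f₂) ∈ MW T ∧
    ¬ (∀ A B : X →L[ℝ] X, (∀ lam : ℝ, nrad T ≤ nrad (T + lam • A)) →
        (∀ lam : ℝ, nrad T ≤ nrad (T + lam • B)) →
        (∀ lam : ℝ, nrad T ≤ nrad (T + lam • (A + B)))) := by
  have hf₁' : ∀ v, f₁ v = (e v).1 + -1 * ((e v).2 / √3) := fun v ↦ by rw [hf₁]; ring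
  have hf₂' : ∀ v, f₂ v = (e v).1 + 1 * ((e v).2 / √3) := fun v ↦ by rw [hf₂]; ring
  have hnr := nrad_eq_half_of_apply_eq_fst_add_mul e hnorm hu hT (by simp) hf₂'
  have hmem₁ := mem_MW_of_apply_eq_fst_add_mul e hnorm hu hT (by simp) hf₁'
  have hmem₂ := mem_MW_of_apply_eq_fst_add_mul e hnorm hu hT (by simp) hf₂'
  have hmid : u = (1 / 2 : ℝ) • (e.symm (1 / 2, √3 / 2) + e.symm (-(1 / 2), √3 / 2)) := by
    rw [← map_add, ← map_smul, e.eq_symm_apply, hu, Prod.mk_add_mk, Prod.smul_mk, smul_eq_mul,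
      smul_eq_mul, Prod.mk.injEq]
    constructor <;> ring
  have := e.symm.finiteDimensional
  refine ⟨hnr, hmem₁, hmem₂, not_nradOrthogonal_add_of_mem_MW hmem₁ hmem₂
    (A := fstSmulRight e (e.symm (1 / 2, √3 / 2)))
    (B := fstSmulRight e (e.symm (-(1 / 2), √3 / 2))) ?_ ?_ (c := 1 / 2) ?_ (by norm_num [hnr])⟩
  · simp [hf₁, sqrt_three_div_two_div_sqrt_three]
  · simp [hf₂, sqrt_three_div_two_div_sqrt_three]
  · ext v
    simp [hT, hmid, smul_smul, mul_comm]
end
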